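/- (Symplectic SVD / SVD-like decomposition, real case) For any 2n×2n real invertible matrix G there exist an orthogonal matrix O ∈ O(2n), a real symplectic matrix S (i.e., Sᵀ J_n S = J_n), and an n×n positive diagonal matrix Σ, such that G = O · diag(Σ, Σ) · S. -/

import Mathlib

/-!
`K = G J Gᵀ` is an invertible skew-symmetric matrix. For an injective skew-adjoint operator `K`,
a unit eigenvector `v` of the positive operator `-K²` spans with `f = K v / ‖K v‖` a `K`-invariant
plane on which `K` acts as `[[0, -σ], [σ, 0]]`; its orthogonal complement is again invariant, so
induction gives an orthonormal basis putting `K` in this block form. Writing the block form as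
`D J D` with `D = diag(√σ, √σ)` yields `K = P J Pᵀ` for `P = O D`, whence `S = P⁻¹ G` is
symplectic and `G = O D S`. (Mathlib's `J` is `-J_n`; both define the same symplectic group.)
-/

open Matrix Module
open scoped RealInnerProductSpace

variable {V : Type*} [NormedAddCommGroup V] [InnerProductSpace ℝ V] {K : V →ₗ[ℝ] V}

lemma inner_map_self_eq_zero_of_skew (hK : ∀ x y, ⟪K x, y⟫ = -⟪x, K y⟫) (x : V) :
    ⟪K x, x⟫ = 0 := by
  have := hK x x
  rw [real_inner_comm (K x) x] at this
  linarith

lemma isSymmetric_neg_comp_self_of_skew (hK : ∀ x y, ⟪K x, y⟫ = -⟪x, K y⟫) :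
    (-(K ∘ₗ K)).IsSymmetric := by
  intro x y
  simp only [LinearMap.neg_apply, LinearMap.comp_apply, inner_neg_left, inner_neg_right, hK,
    neg_neg]

lemma exists_orthonormal_skew_pair [FiniteDimensional ℝ V] [Nontrivial V]
    (hK : ∀ x y, ⟪K x, y⟫ = -⟪x, K y⟫) (hinj : Function.Injective K) :
    ∃ (σ : ℝ) (v f : V), 0 < σ ∧ Orthonormal ℝ ![v, f] ∧ K v = σ • f ∧ K f = -(σ • v) := by
  have hM := isSymmetric_neg_comp_self_of_skew hK
  let i₀ : Fin (finrank ℝ V) := ⟨0, finrank_pos⟩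
  set v := hM.eigenvectorBasis rfl i₀
  set μ := hM.eigenvalues rfl i₀
  have hv : ‖v‖ = 1 := (hM.eigenvectorBasis rfl).orthonormal.1 i₀
  have hKKv : K (K v) = -(μ • v) := by
    simpa [neg_eq_iff_eq_neg] using hM.apply_eigenvectorBasis rfl i₀
  set σ := ‖K v‖
  have hσ : 0 < σ := norm_pos_iff.2 fun h =>
    (hM.eigenvectorBasis rfl).orthonormal.ne_zero i₀ (hinj (h.trans K.map_zero.symm))
  have hμ : μ = σ ^ 2 := by
    rw [← real_inner_self_eq_norm_sq, hK, hKKv, inner_neg_right, neg_neg, real_inner_smul_right,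
      real_inner_self_eq_norm_sq, hv, one_pow, mul_one]
  refine ⟨σ, v, σ⁻¹ • K v, hσ, ?_, ?_, ?_⟩
  · rw [orthonormal_iff_ite]
    intro i j
    fin_cases i <;> fin_cases j <;>
      simp [hv, real_inner_smul_right, inner_map_self_eq_zero_of_skew hK,
        real_inner_comm (K v) v, real_inner_comm v, norm_smul, σ, hσ.ne']
  · rw [smul_smul, mul_inv_cancel₀ hσ.ne', one_smul]
  · rw [map_smul, hKKv, smul_neg, smul_smul, hμ]
    field_simp

lemma orthonormal_sumElim_cons {m : ℕ} {v f : V} {c : Fin m ⊕ Fin m → V}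
    (hvf : Orthonormal ℝ ![v, f]) (hc : Orthonormal ℝ c)
    (hv : ∀ j, ⟪v, c j⟫ = 0) (hf : ∀ j, ⟪f, c j⟫ = 0) :
    Orthonormal ℝ (Sum.elim (Fin.cons v (c ∘ .inl)) (Fin.cons f (c ∘ .inr)) :
      Fin (m + 1) ⊕ Fin (m + 1) → V) := by
  rw [orthonormal_iff_ite] at hvf hc ⊢
  have hvv : ⟪v, v⟫ = 1 := hvf 0 0
  have hff : ⟪f, f⟫ = 1 := hvf 1 1
  have hvf' : ⟪v, f⟫ = 0 := hvf 0 1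
  have hv' : ∀ j, ⟪c j, v⟫ = 0 := fun j => by rw [real_inner_comm, hv]
  have hf' : ∀ j, ⟪c j, f⟫ = 0 := fun j => by rw [real_inner_comm, hf]
  rintro (i | i) (j | j) <;> cases i using Fin.cases <;> cases j using Fin.cases <;>
    simp_all [Fin.succ_ne_zero, (Fin.succ_ne_zero _).symm, real_inner_comm v f]

lemma apply_mem_orthogonal_of_skew (hK : ∀ x y, ⟪K x, y⟫ = -⟪x, K y⟫)
    {U : Submodule ℝ V} (hU : ∀ x ∈ U, K x ∈ U) : ∀ x ∈ Uᗮ, K x ∈ Uᗮ := by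
  intro x hx
  rw [Submodule.mem_orthogonal] at hx ⊢
  intro u hu
  rw [← neg_eq_zero, ← hK, hx _ (hU u hu)]

theorem exists_orthonormal_skew_pairs [FiniteDimensional ℝ V]
    (hK : ∀ x y, ⟪K x, y⟫ = -⟪x, K y⟫) (hinj : Function.Injective K) {m : ℕ}
    (hm : finrank ℝ V = 2 * m) :
    ∃ (σ : Fin m → ℝ) (b : Fin m ⊕ Fin m → V), Orthonormal ℝ b ∧ (∀ i, 0 < σ i) ∧
      (∀ i, K (b (.inl i)) = σ i • b (.inr i)) ∧ ∀ i, K (b (.inr i)) = -(σ i • b (.inl i)) := by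
  induction m generalizing V with
  | zero =>
    exact ⟨Fin.elim0, isEmptyElim, .of_isEmpty _, fun i => i.elim0, fun i => i.elim0,
      fun i => i.elim0⟩
  | succ m ih =>
    have : Nontrivial V := Module.nontrivial_of_finrank_pos (R := ℝ) (by omega)
    obtain ⟨σ₀, v, f, hσ₀, hvf, hKv, hKf⟩ := exists_orthonormal_skew_pair hK hinj
    set U := Submodule.span ℝ (Set.range ![v, f])
    have hvU : v ∈ U := Submodule.subset_span ⟨0, rfl⟩
    have hfU : f ∈ U := Submodule.subset_span ⟨1, rfl⟩
    have hUK : ∀ x ∈ U, K x ∈ U := by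
      refine fun x hx => (Submodule.span_le (p := U.comap K)).2 ?_ hx
      refine Set.range_subset_iff.2 fun i => ?_
      fin_cases i
      · simpa [hKv] using U.smul_mem σ₀ hfU
      · simpa [hKf] using U.smul_mem σ₀ hvU
    have hW : finrank ℝ Uᗮ = 2 * m := by
      have := U.finrank_add_finrank_orthogonal
      rw [finrank_span_eq_card hvf.linearIndependent] at this
      simp at this
      omega
    obtain ⟨σ, b, hb, hσ, hbl, hbr⟩ := ih (K := K.restrict (apply_mem_orthogonal_of_skew hK hUK))
      (fun x y => hK x y) (fun x y h => Subtype.ext (hinj congr(($h : V)))) hW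
    set c := Uᗮ.subtypeₗᵢ ∘ b
    have hcU : ∀ u ∈ U, ∀ j, ⟪u, c j⟫ = 0 := fun u hu j =>
      Submodule.inner_right_of_mem_orthogonal hu (b j).2
    refine ⟨Fin.cons σ₀ σ, Sum.elim (Fin.cons v (c ∘ .inl)) (Fin.cons f (c ∘ .inr)),
      orthonormal_sumElim_cons hvf (hb.comp_linearIsometry _) (hcU v hvU) (hcU f hfU),
      Fin.cases hσ₀ hσ, Fin.cases hKv fun j => ?_, Fin.cases hKf fun j => ?_⟩
    · simpa [c] using congr(($(hbl j) : V))
    · simpa [c] using congr(($(hbr j) : V))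

namespace Matrix

variable {n : ℕ}

lemma inner_toEuclideanLin_of_transpose_eq_neg {ι : Type*} [Fintype ι] [DecidableEq ι]
    {K : Matrix ι ι ℝ} (hK : Kᵀ = -K) (x y : EuclideanSpace ℝ ι) :
    ⟪K.toEuclideanLin x, y⟫ = -⟪x, K.toEuclideanLin y⟫ := by
  rw [← LinearMap.adjoint_inner_right, ← toEuclideanLin_conjTranspose_eq_adjoint,
    conjTranspose_eq_transpose_of_trivial, hK, map_neg, LinearMap.neg_apply, inner_neg_right]

theorem exists_orthogonal_skew_normal_form (K : Matrix (Fin n ⊕ Fin n) (Fin n ⊕ Fin n) ℝ)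
    (hKT : Kᵀ = -K) (hK : IsUnit K.det) :
    ∃ (O : Matrix (Fin n ⊕ Fin n) (Fin n ⊕ Fin n) ℝ) (σ : Fin n → ℝ),
      Oᵀ * O = 1 ∧ (∀ i, 0 < σ i) ∧ K * O = O * fromBlocks 0 (-diagonal σ) (diagonal σ) 0 := by
  have hinj : Function.Injective K.toEuclideanLin := fun x y h =>
    WithLp.ofLp_injective 2 <| mulVec_injective_iff_isUnit.2 ((isUnit_iff_isUnit_det K).2 hK)
      congr(WithLp.ofLp $h)
  obtain ⟨σ, b, hb, hσ, hbl, hbr⟩ :=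
    exists_orthonormal_skew_pairs (inner_toEuclideanLin_of_transpose_eq_neg hKT) hinj (m := n)
      (by simp [two_mul])
  refine ⟨of fun i j => b j i, σ, ?_, hσ, ?_⟩
  · ext i j
    simpa [mul_apply, PiLp.inner_apply, mul_comm, one_apply] using orthonormal_iff_ite.1 hb i j
  · ext i (j | j)
    · simpa [mul_apply, mulVec, dotProduct, fromBlocks, diagonal_apply, Fintype.sum_sum_type,
        mul_comm] using congr(($(hbl j)) i)
    · simpa [mul_apply, mulVec, dotProduct, fromBlocks, diagonal_apply, Fintype.sum_sum_type,
        mul_comm] using congr(($(hbr j)) i)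

section J

variable {l R : Type*} [Fintype l] [DecidableEq l] [CommRing R]

lemma transpose_mul_J_mul_transpose (A : Matrix (l ⊕ l) (l ⊕ l) R) :
    (A * J l R * Aᵀ)ᵀ = -(A * J l R * Aᵀ) := by
  simp [transpose_mul, J_transpose, Matrix.mul_assoc]

lemma isUnit_det_mul_J_mul_transpose_iff {A : Matrix (l ⊕ l) (l ⊕ l) R} :
    IsUnit (A * J l R * Aᵀ).det ↔ IsUnit A.det := by
  have hJ := SymplecticGroup.symplectic_det (SymplecticGroup.J_mem (l := l) (R := R))
  simp [det_mul, det_transpose, IsUnit.mul_iff, hJ]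

lemma fromBlocks_diagonal_mul_J_mul (d : l → R) :
    fromBlocks (diagonal d) 0 0 (diagonal d) * J l R * fromBlocks (diagonal d) 0 0 (diagonal d) =
      fromBlocks 0 (-diagonal (d * d)) (diagonal (d * d)) 0 := by
  simp only [J, fromBlocks_multiply, Matrix.mul_zero, Matrix.zero_mul, Matrix.mul_one,
    Matrix.mul_neg, Matrix.neg_mul, add_zero, zero_add, neg_zero, diagonal_mul_diagonal]
  rfl

lemma inv_mul_mem_symplecticGroup {P G : Matrix (l ⊕ l) (l ⊕ l) R} (hP : IsUnit P.det)
    (h : P * J l R * Pᵀ = G * J l R * Gᵀ) : P⁻¹ * G ∈ symplecticGroup l R := by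
  rw [SymplecticGroup.mem_iff]
  calc P⁻¹ * G * J l R * (P⁻¹ * G)ᵀ = P⁻¹ * (G * J l R * Gᵀ) * Pᵀ⁻¹ := by
        simp only [transpose_mul, transpose_nonsing_inv, Matrix.mul_assoc]
    _ = J l R := by
        rw [← h]
        simp only [Matrix.mul_assoc]
        rw [nonsing_inv_mul_cancel_left _ _ hP, mul_nonsing_inv _ (isUnit_det_transpose _ hP),
          Matrix.mul_one]

end J

theorem exists_orthogonal_diagonal_congr_J (K : Matrix (Fin n ⊕ Fin n) (Fin n ⊕ Fin n) ℝ)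
    (hKT : Kᵀ = -K) (hK : IsUnit K.det) :
    ∃ (O : Matrix (Fin n ⊕ Fin n) (Fin n ⊕ Fin n) ℝ) (δ : Fin n → ℝ),
      Oᵀ * O = 1 ∧ (∀ i, 0 < δ i) ∧
      K = O * fromBlocks (diagonal δ) 0 0 (diagonal δ) * J (Fin n) ℝ *
        (O * fromBlocks (diagonal δ) 0 0 (diagonal δ))ᵀ := by
  obtain ⟨O, σ, hO, hσ, hKO⟩ := exists_orthogonal_skew_normal_form K hKT hK
  refine ⟨O, fun i => √(σ i), hO, fun i => Real.sqrt_pos.2 (hσ i), ?_⟩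
  have hσ' : (fun i => √(σ i)) * (fun i => √(σ i)) = σ :=
    funext fun i => Real.mul_self_sqrt (hσ i).le
  calc K = K * O * Oᵀ := by rw [Matrix.mul_assoc, mul_eq_one_comm.1 hO, Matrix.mul_one]
    _ = _ := by
      rw [hKO, ← hσ', ← fromBlocks_diagonal_mul_J_mul, transpose_mul, fromBlocks_transpose]
      simp [Matrix.mul_assoc]

end Matrix

theorem symplectic_svd_real (n : ℕ)
    (G : Matrix (Fin n ⊕ Fin n) (Fin n ⊕ Fin n) ℝ) (hG : IsUnit G.det) :
    ∃ (O S : Matrix (Fin n ⊕ Fin n) (Fin n ⊕ Fin n) ℝ) (σ : Fin n → ℝ),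
      Oᵀ * O = 1 ∧
      Sᵀ * Matrix.fromBlocks 0 1 (-1) 0 * S = Matrix.fromBlocks 0 1 (-1) 0 ∧
      (∀ i, 0 < σ i) ∧
      G = O * Matrix.fromBlocks (Matrix.diagonal σ) 0 0 (Matrix.diagonal σ) * S := by
  obtain ⟨O, δ, hO, hδ, hK⟩ := exists_orthogonal_diagonal_congr_J (G * J (Fin n) ℝ * Gᵀ)
    (transpose_mul_J_mul_transpose G) (isUnit_det_mul_J_mul_transpose_iff.2 hG)
  set P := O * fromBlocks (diagonal δ) 0 0 (diagonal δ)
  have hP : IsUnit P.det :=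
    isUnit_det_mul_J_mul_transpose_iff.1 (hK ▸ isUnit_det_mul_J_mul_transpose_iff.2 hG)
  have hJ : (fromBlocks 0 1 (-1) 0 : Matrix (Fin n ⊕ Fin n) (Fin n ⊕ Fin n) ℝ) = -J (Fin n) ℝ := by
    simp [J, fromBlocks_neg]
  refine ⟨O, P⁻¹ * G, δ, hO, ?_, hδ, ?_⟩
  · rw [hJ, Matrix.mul_neg, Matrix.neg_mul,
      SymplecticGroup.mem_iff'.1 (inv_mul_mem_symplecticGroup hP hK.symm)]
  · exact (mul_nonsing_inv_cancel_left _ _ hP).symm
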